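/- In the Gaussian-process posterior setup below, the sequence (uⁿ) converges in the norm of H as n → ∞: there exists u∞ ∈ H with ‖uⁿ − u∞‖ → 0. (This is the abstract form of the lemma that the posterior kernel sections kⁿ(x,·) converge in the RKHS norm of the prior kernel, irrespective of the choice of design points; the proof rests on the inequality ‖uⁿ⁺ᵐ − uⁿ‖² ≤ ⟨ξ, uⁿ⟩ − ⟨ξ, uⁿ⁺ᵐ⟩ and the monotone convergence of ⟨ξ, uⁿ⟩.) -/

import Mathlib

open Matrix Filter
open scoped RealInnerProductSpace

variable {H : Type*} [NormedAddCommGroup H] [InnerProductSpace ℝ H]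

/-- The Gram matrix `Gₙ` with entries `⟪φ i, φ j⟫ + λ i · δᵢⱼ`. -/
noncomputable def gramMat (φ : ℕ → H) (lam : ℕ → ℝ) (n : ℕ) :
    Matrix (Fin n) (Fin n) ℝ :=
  Matrix.of fun i j : Fin n => ⟪φ i, φ j⟫ + if i = j then lam i else 0

/-- The posterior vector `uⁿ := ξ − Σ_{i<n} wⁿᵢ · φ i` where `wⁿ := Gₙ⁻¹ kₙ`
and `kₙ = (⟪φ i, ξ⟫)_{i<n}`; in particular `u⁰ = ξ`. -/
noncomputable def postVec (ξ : H) (φ : ℕ → H) (lam : ℕ → ℝ) (n : ℕ) : H :=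
  ξ - ∑ i : Fin n,
    (((gramMat φ lam n)⁻¹ *ᵥ fun i : Fin n => ⟪φ i, ξ⟫) i) • φ i

/-!
Put `ψᵢ := (φᵢ, √λᵢ eᵢ)` in `H × ℓ²(ℕ)`. Then `Gₙ` is the Gram matrix of `ψ₀, …, ψₙ₋₁` and
`⟪ψᵢ, (ξ, 0)⟫ = ⟪φᵢ, ξ⟫`, so `Gₙ wⁿ = kₙ` are the normal equations saying that `∑ wⁿᵢ ψᵢ` is the
orthogonal projection of `(ξ, 0)` onto `span {ψᵢ | i < n}`, and `uⁿ` is `ξ` minus its first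
component. Orthogonal projections onto an increasing sequence of subspaces converge pointwise.
-/

open Submodule Set
open scoped lp InnerProductSpace

instance FiniteDimensional.span_range_of_finite {K V ι : Type*} [DivisionRing K] [AddCommGroup V]
    [Module K V] [Finite ι] (v : ι → V) : FiniteDimensional K (span K (range v)) :=
  FiniteDimensional.span_of_finite K (finite_range v)

section GramProjection

variable {𝕜 E ι : Type*} [RCLike 𝕜] [NormedAddCommGroup E] [InnerProductSpace 𝕜 E] [Fintype ι]

theorem sum_smul_eq_starProjection_of_gram_mulVec_eq {v : ι → E} {x : E} {w : ι → 𝕜}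
    (hw : gram 𝕜 v *ᵥ w = fun i => ⟪v i, x⟫_𝕜) :
    ∑ i, w i • v i = (span 𝕜 (range v)).starProjection x := by
  refine (eq_starProjection_of_mem_of_inner_eq_zero
    (sum_mem fun i _ => smul_mem _ _ (subset_span (mem_range_self i))) fun y hy => ?_).symm
  rw [← inner_eq_zero_symm]
  induction hy using span_induction with
  | mem y hy =>
    obtain ⟨j, rfl⟩ := hy
    have hj := congrFun hw j
    simp only [mulVec, dotProduct, gram_apply] at hj
    simp [inner_sub_right, inner_sum, inner_smul_right, ← hj, mul_comm]
  | zero => exact inner_zero_left _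
  | add y z _ _ hy hz => rw [inner_add_left, hy, hz, add_zero]
  | smul a y _ hy => rw [inner_smul_left, hy, mul_zero]

end GramProjection

noncomputable def augVec (φ : ℕ → H) (lam : ℕ → ℝ) (i : ℕ) : WithLp 2 (H × ℓ²(ℕ, ℝ)) :=
  WithLp.toLp 2 (φ i, lp.single 2 i √(lam i))

theorem inner_augVec (φ : ℕ → H) {lam : ℕ → ℝ} (hlam : ∀ i, 0 ≤ lam i) (i j : ℕ) :
    ⟪augVec φ lam i, augVec φ lam j⟫ = ⟪φ i, φ j⟫ + if i = j then lam i else 0 := by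
  rw [augVec, augVec, WithLp.prod_inner_apply, lp.inner_single_left, lp.single_apply]
  split_ifs with h
  · subst h
    simp [hlam i]
  · simp [h]

theorem gram_augVec (φ : ℕ → H) {lam : ℕ → ℝ} (hlam : ∀ i, 0 ≤ lam i) (n : ℕ) :
    gram ℝ (fun i : Fin n => augVec φ lam i) = gramMat φ lam n := by
  ext i j
  simp [gramMat, inner_augVec φ hlam, Fin.val_inj]

theorem gramMat_eq_gram_add_diagonal (φ : ℕ → H) (lam : ℕ → ℝ) (n : ℕ) :
    gramMat φ lam n = gram ℝ (fun i : Fin n => φ i) + diagonal fun i : Fin n => lam i := by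
  ext i j
  simp [gramMat, diagonal_apply]

theorem gramMat_posDef (φ : ℕ → H) {lam : ℕ → ℝ} (hlam : ∀ i, 0 < lam i) (n : ℕ) :
    (gramMat φ lam n).PosDef := by
  rw [gramMat_eq_gram_add_diagonal]
  exact PosDef.posSemidef_add (posSemidef_gram ℝ _) (PosDef.diagonal fun i => hlam i)

theorem postVec_eq_sub_fst_starProjection (ξ : H) (φ : ℕ → H) {lam : ℕ → ℝ}
    (hlam : ∀ i, 0 < lam i) (n : ℕ) :
    postVec ξ φ lam n = ξ - WithLp.fstL 2 ℝ H ℓ²(ℕ, ℝ)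
      ((span ℝ (range fun i : Fin n => augVec φ lam i)).starProjection (WithLp.toLp 2 (ξ, 0))) := by
  have hG : IsUnit (gramMat φ lam n).det := (gramMat_posDef φ hlam n).det_pos.ne'.isUnit
  rw [← sum_smul_eq_starProjection_of_gram_mulVec_eq
    (w := (gramMat φ lam n)⁻¹ *ᵥ fun i : Fin n => ⟪φ i, ξ⟫)]
  · simp [postVec, augVec]
  · rw [gram_augVec φ fun i => (hlam i).le, mulVec_mulVec, mul_nonsing_inv _ hG, one_mulVec]
    simp [augVec, WithLp.prod_inner_apply]

/-- The sequence `uⁿ` of posterior kernel sections converges in the norm of `H`. -/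
theorem postVec_converges [CompleteSpace H] (ξ : H) (φ : ℕ → H) (lam : ℕ → ℝ)
    (hlam : ∀ ℓ, 0 < lam ℓ) :
    ∃ uinf : H, Tendsto (fun n => postVec ξ φ lam n) atTop (nhds uinf) := by
  let K : ℕ → Submodule ℝ (WithLp 2 (H × ℓ²(ℕ, ℝ))) := fun n =>
    span ℝ (range fun i : Fin n => augVec φ lam i)
  have hK : Monotone K := fun m n hmn =>
    span_mono <| range_subset_iff.2 fun i => ⟨Fin.castLE hmn i, rfl⟩
  simp_rw [postVec_eq_sub_fst_starProjection ξ φ hlam]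
  exact ⟨_, tendsto_const_nhds.sub <| ((WithLp.fstL 2 ℝ H ℓ²(ℕ, ℝ)).continuous.tendsto _).comp <|
    starProjection_tendsto_closure_iSup K hK (WithLp.toLp 2 (ξ, 0))⟩
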